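/- Let a,b,c,d be points on the unit circle S¹ occurring in this positive order with ac ≠ bd, let f = LIS[a,c,b,d] be the intersection point of the Euclidean lines L[a,c] and L[b,d], and suppose f ≠ 0. If m ∈ J*[a,c] ∩ J*[b,d] is the intersection point of the hyperbolic lines J*[a,c] and J*[b,d], then m·conj(f) ∈ ℝ; that is, f and m are collinear with the origin. -/

import Mathlib

open ComplexConjugate

/-- The intersection point of the Euclidean lines through `a, b` and through `c, d`. -/
noncomputable def LIS (a b c d : ℂ) : ℂ :=
  ((conj a * b - a * conj b) * (c - d) - (conj c * d - c * conj d) * (a - b)) /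
    ((conj a - conj b) * (c - d) - (conj c - conj d) * (a - b))

open scoped Classical in
/-- The hyperbolic line in the unit disk with endpoints `a, c` on the unit circle. -/
noncomputable def Jstar (a c : ℂ) : Set ℂ :=
  if c = -a then
    {z : ℂ | ‖z‖ < 1 ∧ ∃ r : ℝ, z / a = (r : ℂ)}
  else
    {z : ℂ | ‖z‖ < 1 ∧
      ((‖z‖ : ℂ) ^ 2 + 1 =
        conj (2 * (a - c) / (a * conj c - conj a * c)) * z +
          (2 * (a - c) / (a * conj c - conj a * c)) * conj z)}

/-!
For `a, c` on the unit circle, the chord through `a` and `c` is `{z | z + a c z̄ = a + c}`, and the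
hyperbolic line `J*[a,c]` (a circle orthogonal to `S¹`, or a diameter) consists of the `z` in the
disk with `z + a c z̄ = t (a + c)`, where `t = (‖z‖² + 1) / 2` is real. Hence `m / t` lies on both
chords `L[a,c]` and `L[b,d]`. As `z + a c z̄` and `z + b d z̄` together determine `z` when
`ac ≠ bd`, this forces `m / t = f`, so `m f̄ = t ‖f‖²` is real.
-/

lemma LIS_comm (a b c d : ℂ) : LIS a b c d = LIS c d a b := by
  rw [LIS, LIS, ← neg_div_neg_eq]
  ring_nf

lemma eq_of_add_mul_conj_eq {z w p q : ℂ} (hp : z + p * conj z = w + p * conj w)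
    (hq : z + q * conj z = w + q * conj w) (hpq : p ≠ q) : z = w := by
  have hmul : (p - q) * conj (z - w) = 0 := by
    rw [map_sub]
    linear_combination hp - hq
  have hzw : conj (z - w) = 0 := (mul_eq_zero.mp hmul).resolve_left (sub_ne_zero.mpr hpq)
  rwa [map_eq_zero, sub_eq_zero] at hzw

section UnitCircle

variable {a b c d m : ℂ}

lemma ne_zero_of_norm_eq_one {z : ℂ} (hz : ‖z‖ = 1) : z ≠ 0 :=
  norm_ne_zero_iff.mp (hz ▸ one_ne_zero)

lemma LIS_eq_of_norm_eq_one (ha : ‖a‖ = 1) (hb : ‖b‖ = 1) (hc : ‖c‖ = 1) (hd : ‖d‖ = 1)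
    (hac : a ≠ c) (hbd : b ≠ d) (hne : a * c ≠ b * d) :
    LIS a c b d = (a * c * (b + d) - b * d * (a + c)) / (a * c - b * d) := by
  have ha0 : a ≠ 0 := ne_zero_of_norm_eq_one ha
  have hb0 : b ≠ 0 := ne_zero_of_norm_eq_one hb
  have hc0 : c ≠ 0 := ne_zero_of_norm_eq_one hc
  have hd0 : d ≠ 0 := ne_zero_of_norm_eq_one hd
  have hne' : a * c - b * d ≠ 0 := sub_ne_zero.mpr hne
  rw [LIS, ← Complex.inv_eq_conj ha, ← Complex.inv_eq_conj hb, ← Complex.inv_eq_conj hc,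
    ← Complex.inv_eq_conj hd]
  have hden : (a⁻¹ - c⁻¹) * (b - d) - (b⁻¹ - d⁻¹) * (a - c) =
      (a - c) * (b - d) * (a * c - b * d) / (a * b * c * d) := by
    field_simp; ring
  rw [hden, div_eq_div_iff (by simp [*, sub_eq_zero]) hne']
  field_simp
  ring

lemma LIS_add_mul_conj (ha : ‖a‖ = 1) (hb : ‖b‖ = 1) (hc : ‖c‖ = 1) (hd : ‖d‖ = 1)
    (hac : a ≠ c) (hbd : b ≠ d) (hne : a * c ≠ b * d) :
    LIS a c b d + a * c * conj (LIS a c b d) = a + c := by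
  have ha0 : a ≠ 0 := ne_zero_of_norm_eq_one ha
  have hb0 : b ≠ 0 := ne_zero_of_norm_eq_one hb
  have hc0 : c ≠ 0 := ne_zero_of_norm_eq_one hc
  have hd0 : d ≠ 0 := ne_zero_of_norm_eq_one hd
  have hne' : a * c - b * d ≠ 0 := sub_ne_zero.mpr hne
  rw [LIS_eq_of_norm_eq_one ha hb hc hd hac hbd hne]
  simp only [map_div₀, map_sub, map_mul, map_add]
  rw [← Complex.inv_eq_conj ha, ← Complex.inv_eq_conj hb, ← Complex.inv_eq_conj hc,
    ← Complex.inv_eq_conj hd]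
  have hne_inv : a⁻¹ * c⁻¹ - b⁻¹ * d⁻¹ ≠ 0 := by
    rw [sub_ne_zero, ← mul_inv, ← mul_inv]
    exact fun h => hne (inv_injective h)
  field_simp
  ring

lemma ne_of_mem_Jstar (ha : a ≠ 0) (hm : m ∈ Jstar a c) : a ≠ c := by
  rintro rfl
  rw [Jstar, if_neg (fun h => ha (by linear_combination h / 2))] at hm
  have hnorm : (‖m‖ : ℂ) ^ 2 + 1 = 0 := by simpa using hm.2
  exact absurd (by exact_mod_cast hnorm : ‖m‖ ^ 2 + 1 = 0) (by positivity)

lemma mem_Jstar_equation (ha : ‖a‖ = 1) (hc : ‖c‖ = 1) (hm : m ∈ Jstar a c) :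
    m + a * c * conj m = (((‖m‖ ^ 2 + 1) / 2 : ℝ) : ℂ) * (a + c) := by
  have ha0 : a ≠ 0 := ne_zero_of_norm_eq_one ha
  have hc0 : c ≠ 0 := ne_zero_of_norm_eq_one hc
  have hac := ne_of_mem_Jstar ha0 hm
  unfold Jstar at hm
  split_ifs at hm with hca
  · obtain ⟨-, r, hr⟩ := hm
    rw [div_eq_iff ha0] at hr
    rw [hca, hr, map_mul, Complex.conj_ofReal, ← Complex.inv_eq_conj ha]
    field_simp
    ring
  · obtain ⟨-, hm⟩ := hm
    have hca' : a + c ≠ 0 := fun h => hca (by linear_combination h)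
    have hc₀ : 2 * (a - c) / (a * conj c - conj a * c) = 2 * a * c / (a + c) := by
      rw [← Complex.inv_eq_conj ha, ← Complex.inv_eq_conj hc, div_eq_div_iff _ hca']
      · field_simp; ring
      · rw [show a * c⁻¹ - a⁻¹ * c = (a - c) * (a + c) / (a * c) by field_simp; ring]
        exact div_ne_zero (mul_ne_zero (sub_ne_zero.mpr hac) hca') (mul_ne_zero ha0 hc0)
    rw [hc₀, map_div₀] at hm
    simp only [map_mul, map_add, map_ofNat, ← Complex.inv_eq_conj ha, ← Complex.inv_eq_conj hc] at hm
    have hinv : a⁻¹ + c⁻¹ ≠ 0 := by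
      rw [show a⁻¹ + c⁻¹ = (a + c) / (a * c) by field_simp; ring]
      exact div_ne_zero hca' (mul_ne_zero ha0 hc0)
    field_simp at hm
    rw [add_comm c a, mul_div_cancel_right₀ m hca'] at hm
    push_cast
    linear_combination -hm / 2

lemma eq_ofReal_mul_LIS_of_mem_Jstar (ha : ‖a‖ = 1) (hb : ‖b‖ = 1) (hc : ‖c‖ = 1)
    (hd : ‖d‖ = 1) (hne : a * c ≠ b * d) (hm : m ∈ Jstar a c ∩ Jstar b d) :
    m = (((‖m‖ ^ 2 + 1) / 2 : ℝ) : ℂ) * LIS a c b d := by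
  have hac := ne_of_mem_Jstar (ne_zero_of_norm_eq_one ha) hm.1
  have hbd := ne_of_mem_Jstar (ne_zero_of_norm_eq_one hb) hm.2
  have hfac := LIS_add_mul_conj ha hb hc hd hac hbd hne
  have hfbd := LIS_add_mul_conj hb ha hd hc hbd hac hne.symm
  rw [← LIS_comm] at hfbd
  have hmac := mem_Jstar_equation ha hc hm.1
  have hmbd := mem_Jstar_equation hb hd hm.2
  set t : ℝ := (‖m‖ ^ 2 + 1) / 2
  refine eq_of_add_mul_conj_eq ?_ ?_ hne <;> rw [map_mul, Complex.conj_ofReal]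
  · linear_combination hmac - t * hfac
  · linear_combination hmbd - t * hfbd

end UnitCircle

theorem stmt16_general (θ₁ θ₂ θ₃ θ₄ : ℝ)
    (a b c d : ℂ)
    (hea : a = Complex.exp (Complex.I * (θ₁ : ℂ)))
    (heb : b = Complex.exp (Complex.I * (θ₂ : ℂ)))
    (hec : c = Complex.exp (Complex.I * (θ₃ : ℂ)))
    (hed : d = Complex.exp (Complex.I * (θ₄ : ℂ)))
    (hnp : a * c ≠ b * d)
    (f : ℂ) (hf : f = LIS a c b d)
    (m : ℂ) (hmem : m ∈ Jstar a c ∩ Jstar b d) :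
    ∃ r : ℝ, m * conj f = (r : ℂ) := by
  have hunit (θ : ℝ) : ‖Complex.exp (Complex.I * θ)‖ = 1 := by
    rw [mul_comm]; exact Complex.norm_exp_ofReal_mul_I θ
  have hm := eq_ofReal_mul_LIS_of_mem_Jstar (hea ▸ hunit θ₁) (heb ▸ hunit θ₂) (hec ▸ hunit θ₃)
    (hed ▸ hunit θ₄) hnp hmem
  rw [← hf] at hm
  generalize (‖m‖ ^ 2 + 1) / 2 = t at hm
  refine ⟨t * Complex.normSq f, ?_⟩
  rw [hm, mul_assoc, Complex.mul_conj, Complex.ofReal_mul]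

theorem stmt16 (θ₁ θ₂ θ₃ θ₄ : ℝ)
    (h12 : θ₁ < θ₂) (h23 : θ₂ < θ₃) (h34 : θ₃ < θ₄) (h41 : θ₄ < θ₁ + 2 * Real.pi)
    (a b c d : ℂ)
    (hea : a = Complex.exp (Complex.I * (θ₁ : ℂ)))
    (heb : b = Complex.exp (Complex.I * (θ₂ : ℂ)))
    (hec : c = Complex.exp (Complex.I * (θ₃ : ℂ)))
    (hed : d = Complex.exp (Complex.I * (θ₄ : ℂ)))
    (hnp : a * c ≠ b * d)
    (f : ℂ) (hf : f = LIS a c b d) (hf0 : f ≠ 0)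
    (m : ℂ) (hmem : m ∈ Jstar a c ∩ Jstar b d) :
    ∃ r : ℝ, m * conj f = (r : ℂ) :=
  stmt16_general θ₁ θ₂ θ₃ θ₄ a b c d hea heb hec hed hnp f hf m hmem
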